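/- arXiv:2403.11248 — 4 statements merged into one kernel-verified Lean document; each statement's English description precedes it below -/
import Mathlib

section
/- For the functions f(x) = x for x ≥ 0 (+∞ otherwise), g(x) = x for x > 0, g(0) = 1 (+∞ otherwise), h(x) = −x for x ≥ 0 (+∞ otherwise) on ℝ, the value of the conjugate-form Lagrange dual sup_{λ ≥ 0} inf_{(u*,v*,γ) ∈ dom g^c} { g^c(u*,v*,γ) − (f + λh)^c(u*,v*,γ) } equals 0, strictly exceeding the primal value inf_{x ≥ 0} { f(x) − g(x) } = −1; hence weak duality fails for this dual pair. -/
open scoped Classical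

noncomputable section

/-- The coupling function on `ℝ` with `W = ℝ³`. -/
def cplR (x : ℝ) (w : ℝ × ℝ × ℝ) : EReal :=
  if w.2.1 * x < w.2.2 then ((w.1 * x : ℝ) : EReal) else ⊤

/-- The c-conjugate of `φ : ℝ → EReal`. -/
def cConjR (φ : ℝ → EReal) (w : ℝ × ℝ × ℝ) : EReal :=
  ⨆ x : ℝ, cplR x w - φ x

/-- `f(x) = x` for `x ≥ 0`, `+∞` otherwise. -/
def fEx (x : ℝ) : EReal := if 0 ≤ x then (x : EReal) else ⊤

/-- `g(x) = x` for `x > 0`, `g(0) = 1`, `+∞` otherwise. -/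
def gEx (x : ℝ) : EReal :=
  if 0 < x then (x : EReal) else if x = 0 then 1 else ⊤

/-- `h(x) = -x` for `x ≥ 0`, `+∞` otherwise. -/
def hEx (x : ℝ) : EReal := if 0 ≤ x then ((-x : ℝ) : EReal) else ⊤

/-- DC difference with the convention `f - g = +∞` outside `dom f`. -/
def dcSub (f g : ℝ → EReal) (x : ℝ) : EReal :=
  if f x = ⊤ then ⊤ else f x - g x

lemma cplR_sub_top (x : ℝ) (w : ℝ × ℝ × ℝ) : cplR x w - ⊤ = ⊥ := by
  unfold cplR; split <;> rfl

lemma cplR_zero (w : ℝ × ℝ × ℝ) (hγ : 0 < w.2.2) : cplR 0 w = 0 := by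
  unfold cplR
  rw [if_pos (by simpa using hγ)]
  norm_cast; ring

/-- domain characterization (one direction). -/
lemma dom_gconj {u v γ : ℝ} (h : cConjR gEx (u, v, γ) ≠ ⊤) :
    u ≤ 1 ∧ v ≤ 0 ∧ 0 < γ := by
  by_contra hc
  apply h
  push_neg at hc
  by_cases hγ : 0 < γ
  · by_cases hv : v ≤ 0
    · -- then u > 1
      have hu : 1 < u := by
        by_contra hu
        exact absurd (hc (le_of_not_gt hu) hv) (not_le.2 hγ)
      -- sup is +∞ : terms (u-1)x unbounded
      rw [cConjR, iSup_eq_top]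
      intro b hb
      induction b using EReal.rec with
      | bot =>
        refine ⟨1, ?_⟩
        have h1 : cplR 1 (u, v, γ) = ((u : ℝ) : EReal) := by
          unfold cplR
          rw [if_pos (by simpa using lt_of_le_of_lt (by linarith : v * 1 ≤ 0) hγ)]
          norm_num
        have hg : gEx 1 = ((1:ℝ) : EReal) := by unfold gEx; norm_num
        rw [h1, hg, show ((u:ℝ):EReal) - ((1:ℝ):EReal) = ((u - 1 : ℝ) : EReal) by norm_cast]
        exact EReal.bot_lt_coe _
      | coe r =>
        set x : ℝ := max 1 ((r + 1) / (u - 1)) with hx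
        have hxpos : 0 < x := lt_of_lt_of_le one_pos (le_max_left _ _)
        refine ⟨x, ?_⟩
        have h1 : cplR x (u, v, γ) = ((u * x : ℝ) : EReal) := by
          unfold cplR
          rw [if_pos]
          have : v * x ≤ 0 := mul_nonpos_of_nonpos_of_nonneg hv hxpos.le
          simpa using lt_of_le_of_lt this hγ
        have hg : gEx x = ((x:ℝ) : EReal) := by unfold gEx; rw [if_pos hxpos]
        rw [h1, hg, show ((u*x:ℝ):EReal) - ((x:ℝ):EReal) = ((u*x - x : ℝ) : EReal) by norm_cast]
        have : r < u * x - x := by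
          have hle : (r + 1) / (u - 1) ≤ x := le_max_right _ _
          have : r + 1 ≤ (u - 1) * x := by
            rw [div_le_iff₀ (by linarith)] at hle; linarith [hle]
          nlinarith
        exact_mod_cast this
      | top => exact absurd hb (lt_irrefl ⊤)
    · -- v > 0 : take x = γ / v
      push_neg at hv
      have hC : cplR (γ / v) (u, v, γ) - gEx (γ / v) = ⊤ := by
        have hxpos : 0 < γ / v := div_pos hγ hv
        have h1 : cplR (γ / v) (u, v, γ) = ⊤ := by
          unfold cplR
          rw [if_neg]
          simp only [not_lt]
          rw [mul_div_cancel₀ _ (ne_of_gt hv)]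
        have hg : gEx (γ / v) = ((γ / v : ℝ) : EReal) := by unfold gEx; rw [if_pos hxpos]
        rw [h1, hg]; exact EReal.top_sub_coe _
      exact top_unique (hC ▸ le_iSup (fun x => cplR x (u, v, γ) - gEx x) (γ / v))
  · -- γ ≤ 0 : x = 0 gives ⊤ - 1 = ⊤
    have hC : cplR 0 (u, v, γ) - gEx 0 = ⊤ := by
      have h1 : cplR 0 (u, v, γ) = ⊤ := by
        unfold cplR; rw [if_neg (by simpa using hγ)]
      have hg : gEx 0 = ((1:ℝ) : EReal) := by unfold gEx; norm_num
      rw [h1, hg]; exact EReal.top_sub_coe _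
    exact top_unique (hC ▸ le_iSup (fun x => cplR x (u, v, γ) - gEx x) 0)

lemma gconj_eq_zero {u v γ : ℝ} (hu : u ≤ 1) (hv : v ≤ 0) (hγ : 0 < γ) :
    cConjR gEx (u, v, γ) = 0 := by
  have hcpl : ∀ x : ℝ, 0 ≤ x → cplR x (u, v, γ) = ((u * x : ℝ) : EReal) := by
    intro x hx
    unfold cplR
    rw [if_pos]
    have : v * x ≤ 0 := mul_nonpos_of_nonpos_of_nonneg hv hx
    simpa using lt_of_le_of_lt this hγ
  apply le_antisymm
  · apply iSup_le
    intro x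
    rcases lt_trichotomy x 0 with hx | hx | hx
    · have hg : gEx x = ⊤ := by
        unfold gEx; rw [if_neg (by linarith), if_neg (by linarith)]
      rw [hg, cplR_sub_top]; exact bot_le
    · subst hx
      rw [hcpl 0 le_rfl, show gEx 0 = ((1:ℝ):EReal) by unfold gEx; norm_num]
      rw [show ((u*0:ℝ):EReal) - ((1:ℝ):EReal) = ((u*0 - 1 : ℝ):EReal) by norm_cast]
      exact_mod_cast (by nlinarith : u * 0 - 1 ≤ (0:ℝ))
    · rw [hcpl x hx.le, show gEx x = ((x:ℝ):EReal) by unfold gEx; rw [if_pos hx]]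
      rw [show ((u*x:ℝ):EReal) - ((x:ℝ):EReal) = ((u*x - x : ℝ):EReal) by norm_cast]
      exact_mod_cast (by nlinarith : u * x - x ≤ (0:ℝ))
  · rw [cConjR, le_iSup_iff]
    intro b hb
    have hval : ∀ x : ℝ, 0 < x →
        ((u * x - x : ℝ) : EReal) ≤ b := by
      intro x hx
      have := hb x
      rwa [hcpl x hx.le, show gEx x = ((x:ℝ):EReal) by unfold gEx; rw [if_pos hx],
        show ((u*x:ℝ):EReal) - ((x:ℝ):EReal) = ((u*x - x : ℝ):EReal) by norm_cast] at this
    rcases eq_or_lt_of_le hu with hu1 | hu1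
    · have := hval 1 one_pos
      subst hu1
      simpa using this
    · -- u < 1
      by_contra hb0
      push_neg at hb0
      have hbne : b ≠ ⊥ := by
        intro hbot
        have := hval 1 one_pos
        rw [hbot, le_bot_iff] at this
        exact EReal.coe_ne_bot _ this
      have hbnt : b ≠ ⊤ := hb0.ne_top
      lift b to ℝ using ⟨hbnt, hbne⟩ with r
      have hr : r < 0 := by exact_mod_cast hb0
      set x : ℝ := r / (2 * (u - 1)) with hx
      have hxpos : 0 < x := div_pos_of_neg_of_neg hr (by linarith)
      have := hval x hxpos
      have hle : u * x - x ≤ r := by exact_mod_cast this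
      have hne : 2 * (u - 1) ≠ 0 := ne_of_lt (by linarith)
      have hxr : x * (2 * (u - 1)) = r := by
        rw [hx, div_mul_cancel₀ _ hne]
      nlinarith [mul_pos hxpos (by linarith : (0:ℝ) < 1 - u)]

lemma fconj_eq_zero {u v γ : ℝ} (hu : u ≤ 1) (hv : v ≤ 0) (hγ : 0 < γ) :
    cConjR fEx (u, v, γ) = 0 := by
  have hcpl : ∀ x : ℝ, 0 ≤ x → cplR x (u, v, γ) = ((u * x : ℝ) : EReal) := by
    intro x hx
    unfold cplR
    rw [if_pos]
    have : v * x ≤ 0 := mul_nonpos_of_nonpos_of_nonneg hv hx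
    simpa using lt_of_le_of_lt this hγ
  apply le_antisymm
  · apply iSup_le
    intro x
    rcases lt_or_ge x 0 with hx | hx
    · have hf : fEx x = ⊤ := by unfold fEx; rw [if_neg (by linarith)]
      rw [hf, cplR_sub_top]; exact bot_le
    · rw [hcpl x hx, show fEx x = ((x:ℝ):EReal) by unfold fEx; rw [if_pos hx]]
      rw [show ((u*x:ℝ):EReal) - ((x:ℝ):EReal) = ((u*x - x : ℝ):EReal) by norm_cast]
      exact_mod_cast (by nlinarith : u * x - x ≤ (0:ℝ))
  · have h0 : cplR 0 (u, v, γ) - fEx 0 = 0 := by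
      rw [hcpl 0 le_rfl, show fEx 0 = ((0:ℝ):EReal) by unfold fEx; norm_num]
      rw [show ((u*0:ℝ):EReal) - ((0:ℝ):EReal) = ((u*0 - 0 : ℝ):EReal) by norm_cast]
      norm_num
    exact h0 ▸ le_iSup (fun x => cplR x (u, v, γ) - fEx x) 0

lemma zero_mul_hEx : (fun x => fEx x + ((0:ℝ) : EReal) * hEx x) = fEx := by
  funext x
  unfold fEx hEx
  by_cases hx : 0 ≤ x
  · rw [if_pos hx, if_pos hx]
    rw [show ((0:ℝ):EReal) * ((-x:ℝ):EReal) = ((0 * (-x) : ℝ) : EReal) by norm_cast]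
    norm_num
  · rw [if_neg hx, if_neg hx]
    simp

lemma lconj_nonneg (l : ℝ) :
    (0 : EReal) ≤ cConjR (fun x => fEx x + ((l : ℝ) : EReal) * hEx x) (1, -1, 1) := by
  have h0 : cplR 0 (1, -1, 1) - (fEx 0 + ((l : ℝ) : EReal) * hEx 0) = 0 := by
    rw [cplR_zero _ (by norm_num : (0:ℝ) < (1, -1, 1).2.2)]
    have hf : fEx 0 = ((0:ℝ):EReal) := by unfold fEx; norm_num
    have hh : hEx 0 = ((0:ℝ):EReal) := by unfold hEx; norm_num
    rw [hf, hh, show ((l:ℝ):EReal) * ((0:ℝ):EReal) = ((l * 0 : ℝ):EReal) by norm_cast]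
    norm_num
  exact h0 ▸ le_iSup (fun x => cplR x (1, -1, 1) - (fEx x + ((l : ℝ) : EReal) * hEx x)) 0

lemma w0_mem : cConjR gEx ((1:ℝ), (-1:ℝ), (1:ℝ)) ≠ ⊤ := by
  rw [gconj_eq_zero le_rfl (by norm_num) one_pos]
  simp

theorem conjugate_lagrange_dual_weak_duality_fails :
    (⨆ l : {l : ℝ // 0 ≤ l}, ⨅ w : {w : ℝ × ℝ × ℝ | cConjR gEx w ≠ ⊤},
        cConjR gEx w - cConjR (fun x => fEx x + ((l : ℝ) : EReal) * hEx x) w)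
      = (0 : EReal) ∧
    (⨅ x ∈ {x : ℝ | hEx x ≤ 0}, dcSub fEx gEx x) = (-1 : EReal) ∧
    (⨅ x ∈ {x : ℝ | hEx x ≤ 0}, dcSub fEx gEx x)
      < (⨆ l : {l : ℝ // 0 ≤ l}, ⨅ w : {w : ℝ × ℝ × ℝ | cConjR gEx w ≠ ⊤},
          cConjR gEx w - cConjR (fun x => fEx x + ((l : ℝ) : EReal) * hEx x) w) := by
  have hdual : (⨆ l : {l : ℝ // 0 ≤ l}, ⨅ w : {w : ℝ × ℝ × ℝ | cConjR gEx w ≠ ⊤},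
        cConjR gEx w - cConjR (fun x => fEx x + ((l : ℝ) : EReal) * hEx x) w)
      = (0 : EReal) := by
    apply le_antisymm
    · apply iSup_le
      intro l
      refine le_trans (iInf_le _ ⟨((1:ℝ), (-1:ℝ), (1:ℝ)), w0_mem⟩) ?_
      have hg : cConjR gEx ((1:ℝ), (-1:ℝ), (1:ℝ)) = 0 :=
        gconj_eq_zero le_rfl (by norm_num) one_pos
      simp only [hg]
      calc (0:EReal) - cConjR (fun x => fEx x + ((l : ℝ) : EReal) * hEx x) ((1:ℝ), (-1:ℝ), (1:ℝ))
          ≤ 0 - 0 := EReal.sub_le_sub le_rfl (lconj_nonneg l)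
        _ = 0 := by simp
    · refine le_trans ?_ (le_iSup _ ⟨0, le_rfl⟩)
      apply le_iInf
      rintro ⟨⟨u, v, γ⟩, hw⟩
      obtain ⟨hu, hv, hγ⟩ := dom_gconj hw
      simp only
      rw [zero_mul_hEx, gconj_eq_zero hu hv hγ, fconj_eq_zero hu hv hγ]
      simp
  have hprimal : (⨅ x ∈ {x : ℝ | hEx x ≤ 0}, dcSub fEx gEx x) = (-1 : EReal) := by
    apply le_antisymm
    · have hmem : (0:ℝ) ∈ {x : ℝ | hEx x ≤ 0} := by
        show hEx 0 ≤ 0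
        unfold hEx; norm_num
      refine le_trans (iInf₂_le (0:ℝ) hmem) ?_
      have h0 : dcSub fEx gEx 0 = (-1 : EReal) := by
        unfold dcSub fEx gEx
        norm_num
      rw [h0]
    · apply le_iInf₂
      intro x hx
      have hx0 : 0 ≤ x := by
        by_contra hneg
        have : hEx x = ⊤ := by unfold hEx; rw [if_neg hneg]
        simp only [Set.mem_setOf_eq, this] at hx
        exact absurd hx (by simp)
      have hf : fEx x = ((x:ℝ):EReal) := by unfold fEx; rw [if_pos hx0]
      rcases eq_or_lt_of_le hx0 with h0 | h0
      · have : dcSub fEx gEx x = (-1 : EReal) := by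
          unfold dcSub
          rw [hf, if_neg (EReal.coe_ne_top x), ← h0]
          rw [show gEx 0 = ((1:ℝ):EReal) by unfold gEx; norm_num]
          rw [show ((0:ℝ):EReal) - ((1:ℝ):EReal) = ((0 - 1 : ℝ):EReal) by norm_cast]
          norm_num
        rw [this]
      · have : dcSub fEx gEx x = (0 : EReal) := by
          unfold dcSub
          rw [hf, if_neg (EReal.coe_ne_top x),
            show gEx x = ((x:ℝ):EReal) by unfold gEx; rw [if_pos h0],
            show ((x:ℝ):EReal) - ((x:ℝ):EReal) = ((x - x : ℝ):EReal) by norm_cast]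
          norm_num
        rw [this]
        exact le_of_lt (by rw [show (-1:EReal) = ((-1:ℝ):EReal) by norm_num,
          show (0:EReal) = ((0:ℝ):EReal) by norm_num]; exact_mod_cast (by norm_num : (-1:ℝ) < 0))
  refine ⟨hdual, hprimal, ?_⟩
  rw [hdual, hprimal]
  rw [show (-1:EReal) = ((-1:ℝ):EReal) by norm_num, show (0:EReal) = ((0:ℝ):EReal) by norm_num]
  exact_mod_cast (by norm_num : (-1:ℝ) < 0)

end
end

section
/- Key to the proof of weak duality under even convexity: (econv g)^c = g^c, i.e., the c-conjugate of the evenly convex hull of a function g having a proper evenly convex minorant coincides with the c-conjugate of g. -/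
open scoped Classical

noncomputable section

variable {X : Type*} [AddCommGroup X] [Module ℝ X] [TopologicalSpace X]

/-- The coupling function `c`. -/
def cpl (x : X) (w : (X →L[ℝ] ℝ) × (X →L[ℝ] ℝ) × ℝ) : EReal :=
  if (w.2.1 x : ℝ) < w.2.2 then ((w.1 x : ℝ) : EReal) else ⊤

/-- The c-conjugate of `f`. -/
def cConj (f : X → EReal) (w : (X →L[ℝ] ℝ) × (X →L[ℝ] ℝ) × ℝ) : EReal :=
  ⨆ x : X, cpl x w - f x

/-- The c-biconjugate `f^{cc'}`; it equals the e-convex hull `econv f` whenever `f`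
has a proper e-convex minorant. -/
def cBiconj (f : X → EReal) (x : X) : EReal :=
  ⨆ w : (X →L[ℝ] ℝ) × (X →L[ℝ] ℝ) × ℝ, cpl x w - cConj f w

lemma ereal_sub_sub_le (a b : EReal) : a - (a - b) ≤ b := by
  induction a with
  | bot => simp [sub_eq_add_neg]
  | top =>
    induction b with
    | bot => simp [sub_eq_add_neg]
    | top => simp [sub_eq_add_neg]
    | coe b => simp [sub_eq_add_neg, EReal.top_add_coe]
  | coe a =>
    induction b with
    | bot => simp [sub_eq_add_neg]
    | top => simp [sub_eq_add_neg]
    | coe b =>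
      norm_cast
      simp

lemma key {a b c : EReal} (h : a - b ≤ c) : a - c ≤ b :=
  le_trans (EReal.sub_le_sub (le_refl a) h) (ereal_sub_sub_le a b)

theorem cConj_econvexHull
    [IsTopologicalAddGroup X] [ContinuousSMul ℝ X] [LocallyConvexSpace ℝ X] [T2Space X]
    (g : X → EReal) (hg₁ : ∀ x, g x ≠ ⊥) (hg₂ : ∃ x, g x ≠ ⊤)
    (hmin : ∃ m : X → EReal, (∀ x, m x ≤ g x) ∧ (∀ x, m x ≠ ⊥) ∧ (∃ x, m x ≠ ⊤) ∧
      (∀ x, m x = cBiconj m x)) :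
    cConj (cBiconj g) = cConj g := by
  have hbi : ∀ x, cBiconj g x ≤ g x := fun x =>
    iSup_le fun w => key (le_iSup (fun y => cpl y w - g y) x)
  funext w
  apply le_antisymm
  · refine iSup_le fun x => key ?_
    exact le_iSup (fun w' => cpl x w' - cConj g w') w
  · exact iSup_le fun x =>
      le_trans (EReal.sub_le_sub (le_refl _) (hbi x))
        (le_iSup (fun y => cpl y w - cBiconj g y) x)

end
end

section
/- If the conjugate Lagrange dual value v(D̄_L) = sup_{λ ∈ ℝ^{(T)}_+} inf_{(u*,v*,γ) ∈ dom g^c} { g^c − (f+λh)^c } is finite, then { (0,0,δ,β) : δ > 0, β > −v(D̄_L) } ⊆ K' ⊆ { (0,0,δ,β) : δ > 0, β ≥ −v(D̄_L) }, where K' = { (0,0,δ,β) : (0,0,0,β) ∈ K, δ > 0 }. If moreover the dual is solvable (the supremum is attained), then K' = { (0,0,δ,β) : δ > 0, β ≥ −v(D̄_L) }. -/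
open scoped Classical

noncomputable section

variable {X : Type*} [AddCommGroup X] [Module ℝ X] [TopologicalSpace X]

/-- The Lagrangian sum `λh = Σ_t λ_t h_t`. -/
def lagSum {T : Type*} (lam : T →₀ ℝ) (h : T → X → EReal) (x : X) : EReal :=
  ∑ t ∈ lam.support, ((lam t : ℝ) : EReal) * h t x

/-- The epigraph of the c-conjugate of `φ`, as a subset of `W × ℝ`. -/
def epiC (φ : X → EReal) : Set ((((X →L[ℝ] ℝ) × (X →L[ℝ] ℝ) × ℝ)) × ℝ) :=
  {p | cConj φ p.1 ≤ (p.2 : EReal)}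

/-- The set `K`. -/
def Kset {T : Type*} (f g : X → EReal) (h : T → X → EReal) :
    Set ((((X →L[ℝ] ℝ) × (X →L[ℝ] ℝ) × ℝ)) × ℝ) :=
  ⋃ lam : {l : T →₀ ℝ // ∀ t, 0 ≤ l t},
    ⋂ w ∈ {w : (X →L[ℝ] ℝ) × (X →L[ℝ] ℝ) × ℝ | cConj g w ≠ ⊤},
      (fun p => p - (w, (cConj g w).toReal)) ''
        epiC (fun x => f x + lagSum (lam : T →₀ ℝ) h x)

/-- The set `K' = {(0,0,δ,β) : (0,0,0,β) ∈ K, δ > 0}`. -/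
def Kset' {T : Type*} (f g : X → EReal) (h : T → X → EReal) :
    Set ((((X →L[ℝ] ℝ) × (X →L[ℝ] ℝ) × ℝ)) × ℝ) :=
  {p | ∃ δ β : ℝ, 0 < δ ∧ p = ((0, 0, δ), β) ∧ ((0, 0, 0), β) ∈ Kset f g h}

/-- The value of the conjugate-form Lagrange dual `(D̄_L)`. -/
def dualVal {T : Type*} (f g : X → EReal) (h : T → X → EReal) : EReal :=
  ⨆ lam : {l : T →₀ ℝ // ∀ t, 0 ≤ l t},
    ⨅ w : {w : (X →L[ℝ] ℝ) × (X →L[ℝ] ℝ) × ℝ | cConj g w ≠ ⊤},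
      cConj g w - cConj (fun x => f x + lagSum (lam : T →₀ ℝ) h x) w


lemma cConj_real_of (g : X → EReal) (hg₁ : ∀ x, g x ≠ ⊥) (hg₂ : ∃ x, g x ≠ ⊤)
    {w : (X →L[ℝ] ℝ) × (X →L[ℝ] ℝ) × ℝ} (hw : cConj g w ≠ ⊤) :
    cConj g w = ((cConj g w).toReal : EReal) := by
  refine (EReal.coe_toReal hw ?_).symm
  obtain ⟨x₀, hx₀⟩ := hg₂
  obtain ⟨a, ha⟩ : ∃ a : ℝ, g x₀ = a := ⟨(g x₀).toReal, (EReal.coe_toReal hx₀ (hg₁ x₀)).symm⟩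
  have hle : cpl x₀ w - g x₀ ≤ cConj g w := le_iSup (fun x => cpl x w - g x) x₀
  have hcpl : cpl x₀ w ≠ ⊤ := by
    intro htop
    apply hw
    refine top_le_iff.mp ?_
    calc (⊤:EReal) = cpl x₀ w - g x₀ := by rw [htop, ha, EReal.top_sub_coe]
    _ ≤ _ := hle
  obtain ⟨u, hu⟩ : ∃ u : ℝ, cpl x₀ w = u := by
    by_cases hc : (w.2.1 x₀ : ℝ) < w.2.2
    · exact ⟨w.1 x₀, by simp [cpl, hc]⟩
    · exact absurd (by simp [cpl, hc]) hcpl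
  intro hbot
  rw [hbot, le_bot_iff, hu, ha, ← EReal.coe_sub] at hle
  exact EReal.coe_ne_bot _ hle

lemma ineq_iff (β c : ℝ) (a : EReal) :
    a ≤ ((β + c : ℝ) : EReal) ↔ ((-β : ℝ) : EReal) ≤ (c : EReal) - a := by
  induction a using EReal.rec with
  | bot => simp
  | coe x =>
    rw [← EReal.coe_sub, EReal.coe_le_coe_iff, EReal.coe_le_coe_iff]
    constructor <;> intro <;> linarith
  | top =>
    have h1 : (c:EReal) - ⊤ = ⊥ := by simp
    rw [h1]
    constructor
    · intro hle; exact absurd (top_le_iff.mp hle) (EReal.coe_ne_top _)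
    · intro hb; exact absurd (le_bot_iff.mp hb) (EReal.coe_ne_bot _)

lemma memK_iff {T : Type*} (f g : X → EReal) (h : T → X → EReal) (β : ℝ) :
    ((((0,0,0), β)) : (((X →L[ℝ] ℝ) × (X →L[ℝ] ℝ) × ℝ)) × ℝ) ∈ Kset f g h ↔
      ∃ lam : {l : T →₀ ℝ // ∀ t, 0 ≤ l t},
        ∀ w : (X →L[ℝ] ℝ) × (X →L[ℝ] ℝ) × ℝ, cConj g w ≠ ⊤ →
          cConj (fun x => f x + lagSum (lam : T →₀ ℝ) h x) w
            ≤ ((β + (cConj g w).toReal : ℝ) : EReal) := by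
  unfold Kset epiC
  simp only [Set.mem_iUnion, Set.mem_iInter, Set.mem_image, Set.mem_setOf_eq]
  constructor
  · rintro ⟨lam, hlam⟩
    refine ⟨lam, fun w hw => ?_⟩
    obtain ⟨p, hp, heq⟩ := hlam w hw
    have hp2 : p = (w, β + (cConj g w).toReal) := by
      have h1 := sub_eq_iff_eq_add.mp heq
      simpa [Prod.mk_zero_zero] using h1
    rw [hp2] at hp
    exact_mod_cast hp
  · rintro ⟨lam, hlam⟩
    refine ⟨lam, fun w hw => ⟨(w, β + (cConj g w).toReal), ?_, ?_⟩⟩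
    · exact_mod_cast hlam w hw
    · rw [Prod.mk_sub_mk, sub_self, add_sub_cancel_right]; rfl

lemma memK_iff' {T : Type*} (f g : X → EReal) (h : T → X → EReal)
    (hg₁ : ∀ x, g x ≠ ⊥) (hg₂ : ∃ x, g x ≠ ⊤) (β : ℝ) :
    ((((0,0,0), β)) : (((X →L[ℝ] ℝ) × (X →L[ℝ] ℝ) × ℝ)) × ℝ) ∈ Kset f g h ↔
      ∃ lam : {l : T →₀ ℝ // ∀ t, 0 ≤ l t},
        ((-β : ℝ) : EReal) ≤
          ⨅ w : {w : (X →L[ℝ] ℝ) × (X →L[ℝ] ℝ) × ℝ | cConj g w ≠ ⊤},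
            cConj g w - cConj (fun x => f x + lagSum (lam : T →₀ ℝ) h x) w := by
  rw [memK_iff]
  refine exists_congr fun lam => ?_
  rw [le_iInf_iff]
  constructor
  · rintro hall ⟨w, hw⟩
    have hc := cConj_real_of g hg₁ hg₂ hw
    have := (ineq_iff β (cConj g w).toReal _).mp (hall w hw)
    rwa [← hc] at this
  · intro hall w hw
    have hc := cConj_real_of g hg₁ hg₂ hw
    refine (ineq_iff β (cConj g w).toReal _).mpr ?_
    rw [← hc]
    exact hall ⟨w, hw⟩

theorem Kset'_between
    [IsTopologicalAddGroup X] [ContinuousSMul ℝ X] [LocallyConvexSpace ℝ X] [T2Space X]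
    {T : Type*}
    (f g : X → EReal) (h : T → X → EReal)
    (hf₁ : ∀ x, f x ≠ ⊥) (hf₂ : ∃ x, f x ≠ ⊤)
    (hfconv : Convex ℝ {p : X × ℝ | f p.1 ≤ (p.2 : EReal)})
    (hg₁ : ∀ x, g x ≠ ⊥) (hg₂ : ∃ x, g x ≠ ⊤)
    (hgconv : Convex ℝ {p : X × ℝ | g p.1 ≤ (p.2 : EReal)})
    (hh : ∀ t, (∀ x, h t x ≠ ⊥) ∧ (∃ x, h t x ≠ ⊤) ∧
      Convex ℝ {p : X × ℝ | h t p.1 ≤ (p.2 : EReal)})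
    (r : ℝ) (hv : dualVal f g h = (r : EReal)) :
    ({p : (((X →L[ℝ] ℝ) × (X →L[ℝ] ℝ) × ℝ)) × ℝ |
        ∃ δ β : ℝ, 0 < δ ∧ -r < β ∧ p = ((0, 0, δ), β)} ⊆ Kset' f g h ∧
      Kset' f g h ⊆ {p : (((X →L[ℝ] ℝ) × (X →L[ℝ] ℝ) × ℝ)) × ℝ |
        ∃ δ β : ℝ, 0 < δ ∧ -r ≤ β ∧ p = ((0, 0, δ), β)}) ∧
    ((∃ lam : {l : T →₀ ℝ // ∀ t, 0 ≤ l t},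
        dualVal f g h =
          ⨅ w : {w : (X →L[ℝ] ℝ) × (X →L[ℝ] ℝ) × ℝ | cConj g w ≠ ⊤},
            cConj g w - cConj (fun x => f x + lagSum (lam : T →₀ ℝ) h x) w) →
      Kset' f g h = {p : (((X →L[ℝ] ℝ) × (X →L[ℝ] ℝ) × ℝ)) × ℝ |
        ∃ δ β : ℝ, 0 < δ ∧ -r ≤ β ∧ p = ((0, 0, δ), β)}) := by
  constructor
  · constructor
    · rintro p ⟨δ, β, hδ, hβ, rfl⟩
      refine ⟨δ, β, hδ, rfl, ?_⟩
      rw [memK_iff' f g h hg₁ hg₂]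
      have hlt : ((-β : ℝ) : EReal) < dualVal f g h := by
        rw [hv]; exact_mod_cast (by linarith : -β < r)
      obtain ⟨lam, hlam⟩ := lt_iSup_iff.mp (hlt.trans_eq (by rw [dualVal]))
      exact ⟨lam, le_of_lt hlam⟩
    · rintro p ⟨δ, β, hδ, rfl, hm⟩
      obtain ⟨lam, hlam⟩ := (memK_iff' f g h hg₁ hg₂ β).mp hm
      have h2 : ((-β : ℝ) : EReal) ≤ dualVal f g h :=
        hlam.trans (le_iSup (fun lam : {l : T →₀ ℝ // ∀ t, 0 ≤ l t} =>
          ⨅ w : {w : (X →L[ℝ] ℝ) × (X →L[ℝ] ℝ) × ℝ | cConj g w ≠ ⊤},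
            cConj g ↑w - cConj (fun x => f x + lagSum (lam : T →₀ ℝ) h x) ↑w) lam)
      rw [hv, EReal.coe_le_coe_iff] at h2
      exact ⟨δ, β, hδ, by linarith, rfl⟩
  · rintro ⟨lam, hlam⟩
    apply Set.eq_of_subset_of_subset
    · rintro p ⟨δ, β, hδ, rfl, hm⟩
      obtain ⟨lam', hlam'⟩ := (memK_iff' f g h hg₁ hg₂ β).mp hm
      have h2 : ((-β : ℝ) : EReal) ≤ dualVal f g h :=
        hlam'.trans (le_iSup (fun lam : {l : T →₀ ℝ // ∀ t, 0 ≤ l t} =>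
          ⨅ w : {w : (X →L[ℝ] ℝ) × (X →L[ℝ] ℝ) × ℝ | cConj g w ≠ ⊤},
            cConj g ↑w - cConj (fun x => f x + lagSum (lam : T →₀ ℝ) h x) ↑w) lam')
      rw [hv, EReal.coe_le_coe_iff] at h2
      exact ⟨δ, β, hδ, by linarith, rfl⟩
    · rintro p ⟨δ, β, hδ, hβ, rfl⟩
      refine ⟨δ, β, hδ, rfl, ?_⟩
      rw [memK_iff' f g h hg₁ hg₂]
      refine ⟨lam, ?_⟩
      rw [← hlam, hv]
      exact_mod_cast (by linarith : -β ≤ r)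


end
end

section
/- If v(P) ∈ ℝ, then the e'-convex hull of the set { (0,0,δ,β) : δ > 0, β > −v(P) } in W × ℝ equals { (0,0,δ,β) : δ > 0, β ≥ −v(P) }. -/
open scoped Classical

noncomputable section

variable {X : Type*} [AddCommGroup X] [Module ℝ X] [TopologicalSpace X]

/-- A set in `W × ℝ` is e'-convex if it is the epigraph of a pointwise supremum of
c'-elementary functions `w ↦ c'(w, x) − α` over some `D ⊆ X × ℝ`. -/
def EpConvexSet (S : Set ((((X →L[ℝ] ℝ) × (X →L[ℝ] ℝ) × ℝ)) × ℝ)) : Prop :=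
  ∃ D : Set (X × ℝ),
    S = {p | (⨆ q ∈ D, cpl q.1 p.1 - ((q.2 : ℝ) : EReal)) ≤ (p.2 : EReal)}

/-- The e'-convex hull: the smallest e'-convex set containing `S`. -/
def epConvexHull (S : Set ((((X →L[ℝ] ℝ) × (X →L[ℝ] ℝ) × ℝ)) × ℝ)) :
    Set ((((X →L[ℝ] ℝ) × (X →L[ℝ] ℝ) × ℝ)) × ℝ) :=
  ⋂₀ {C | EpConvexSet C ∧ S ⊆ C}

lemma ereal_le_of_forall_lt (a : EReal) (c : ℝ) (h : ∀ b : ℝ, c < b → a ≤ (b : EReal)) :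
    a ≤ (c : EReal) := by
  by_contra hc
  push_neg at hc
  obtain ⟨x, hx1, hx2⟩ := EReal.lt_iff_exists_real_btwn.1 hc
  exact absurd (h x (by exact_mod_cast hx1)) (not_le.2 hx2)

theorem epConvexHull_strict_halfline
    [IsTopologicalAddGroup X] [ContinuousSMul ℝ X] [LocallyConvexSpace ℝ X] [T2Space X]
    (r : ℝ) :
    epConvexHull {p : (((X →L[ℝ] ℝ) × (X →L[ℝ] ℝ) × ℝ)) × ℝ |
        ∃ δ β : ℝ, 0 < δ ∧ -r < β ∧ p = ((0, 0, δ), β)} =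
      {p : (((X →L[ℝ] ℝ) × (X →L[ℝ] ℝ) × ℝ)) × ℝ |
        ∃ δ β : ℝ, 0 < δ ∧ -r ≤ β ∧ p = ((0, 0, δ), β)} := by
  apply Set.Subset.antisymm
  · -- hull ⊆ T : show T is e'-convex and contains S
    intro p hp
    apply hp
    constructor
    · -- T is e'-convex with D = range (x, r)
      refine ⟨Set.range (fun x : X => (x, r)), ?_⟩
      ext q
      simp only [Set.mem_setOf_eq, iSup_range]
      constructor
      · rintro ⟨δ, β, hδ, hβ, rfl⟩
        apply iSup_le
        intro x
        simp only [cpl]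
        rw [if_pos (by simpa using hδ)]
        simp only [ContinuousLinearMap.zero_apply]
        rw [show ((0:ℝ):EReal) - (r:EReal) = ((-r : ℝ) : EReal) by
          rw [← EReal.coe_sub]; norm_num]
        exact_mod_cast hβ
      · intro h
        obtain ⟨⟨xs, ys, δ⟩, β⟩ := q
        simp only at h
        -- case analysis
        by_cases hy : ys = 0
        · by_cases hδ : 0 < δ
          · by_cases hx : xs = 0
            · refine ⟨δ, β, hδ, ?_, by simp [hx, hy]⟩
              have h0 : cpl (0 : X) (xs, ys, δ) - (r : EReal) ≤ (β : EReal) :=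
                le_trans (le_iSup (fun x : X => cpl x (xs, ys, δ) - (r : EReal)) (0 : X)) h
              simp only [cpl, hy, hx] at h0
              rw [if_pos (by simpa using hδ)] at h0
              simp only [ContinuousLinearMap.zero_apply] at h0
              rw [show ((0:ℝ):EReal) - (r:EReal) = ((-r : ℝ) : EReal) by
                rw [← EReal.coe_sub]; norm_num] at h0
              exact_mod_cast h0
            · exfalso
              obtain ⟨x0, hx0⟩ : ∃ x0 : X, xs x0 ≠ 0 := by
                by_contra hco; push_neg at hco
                exact hx (ContinuousLinearMap.ext fun x => by simp [hco x])
              set x := ((β + r + 1) * (xs x0)⁻¹) • x0 with hxdef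
              have hxval : xs x = β + r + 1 := by
                simp [hxdef, map_smul, mul_assoc, inv_mul_cancel₀ hx0]
              have hterm : cpl x (xs, ys, δ) - (r : EReal) ≤ (β : EReal) :=
                le_trans (le_iSup (fun x : X => cpl x (xs, ys, δ) - (r : EReal)) x) h
              simp only [cpl, hy] at hterm
              rw [if_pos (by simpa using hδ)] at hterm
              rw [hxval, show ((β + r + 1:ℝ):EReal) - (r:EReal) = ((β + 1 : ℝ) : EReal) by
                rw [← EReal.coe_sub]; congr 1; ring] at hterm
              have : β + 1 ≤ β := by exact_mod_cast hterm
              linarith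
          · exfalso
            have hterm : cpl (0 : X) (xs, ys, δ) - (r : EReal) ≤ (β : EReal) :=
              le_trans (le_iSup (fun x : X => cpl x (xs, ys, δ) - (r : EReal)) (0 : X)) h
            simp only [cpl, hy] at hterm
            rw [if_neg (by simpa using hδ)] at hterm
            rw [EReal.top_sub_coe] at hterm
            exact (not_le.2 (EReal.coe_lt_top β)) hterm
        · exfalso
          obtain ⟨y0, hy0⟩ : ∃ y0 : X, ys y0 ≠ 0 := by
            by_contra hco; push_neg at hco
            exact hy (ContinuousLinearMap.ext fun x => by simp [hco x])
          set x := (δ * (ys y0)⁻¹) • y0 with hxdef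
          have hxval : ys x = δ := by
            simp [hxdef, map_smul, mul_assoc, inv_mul_cancel₀ hy0]
          have hterm : cpl x (xs, ys, δ) - (r : EReal) ≤ (β : EReal) :=
            le_trans (le_iSup (fun x : X => cpl x (xs, ys, δ) - (r : EReal)) x) h
          simp only [cpl] at hterm
          rw [if_neg (by simp [hxval])] at hterm
          rw [EReal.top_sub_coe] at hterm
          exact (not_le.2 (EReal.coe_lt_top β)) hterm
    · -- S ⊆ T
      rintro q ⟨δ, β, hδ, hβ, rfl⟩
      exact ⟨δ, β, hδ, le_of_lt hβ, rfl⟩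
  · -- T ⊆ hull
    rintro p ⟨δ, β, hδ, hβ, rfl⟩
    intro C hC
    obtain ⟨⟨D, rfl⟩, hSC⟩ := hC
    simp only [Set.mem_setOf_eq]
    refine le_trans (ereal_le_of_forall_lt _ (-r) ?_) (by exact_mod_cast hβ)
    intro b hb
    have hmem : ((0, 0, δ), b) ∈ {p : (((X →L[ℝ] ℝ) × (X →L[ℝ] ℝ) × ℝ)) × ℝ |
        ∃ δ β : ℝ, 0 < δ ∧ -r < β ∧ p = ((0, 0, δ), β)} := ⟨δ, b, hδ, hb, rfl⟩
    have h2 := hSC hmem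
    simpa using h2

end
end
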